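/- Let F = C_1 ∨ … ∨ C_ℓ be a k-DNF formula over the n = Nm bits of the encoding (each C_j a Boolean term of width at most k), with k ≤ M/2 and F not identically false. Then 1 − k/M ≤ Pr_D[F]/Pr_U[F] ≤ 1 + 2k/M; in particular, |Pr_D[F] − Pr_U[F]| ≤ 2k/M. -/

import Mathlib

namespace GLN

noncomputable section

open Finset

/-- `M = 2^m`. -/
def MM (m : ℕ) : ℕ := 2 ^ m

/-- `N = ⌈M · m · ln 2⌉`. -/
def NN (m : ℕ) : ℕ := ⌈(MM m : ℝ) * m * Real.log 2⌉₊

/-- Strings `X ∈ [M]^N`. -/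
abbrev Str (m : ℕ) := Fin (NN m) → Fin (MM m)

/-- The uniform probability mass function on `[M]^N`. -/
def umass (m : ℕ) (_X : Str m) : ℝ := 1 / (MM m : ℝ) ^ NN m

/-- The image `Im(X) ⊆ [M]` of a string, as a finset. -/
def img {m : ℕ} (X : Str m) : Finset (Fin (MM m)) := Finset.image X Finset.univ

/-- Transition kernel of `D_y(X)`: each coordinate with `x_i = y` is replaced by a uniform
independent sample from `[M] \ {y}`; other coordinates are unchanged. -/
def kerDy (m : ℕ) (y : Fin (MM m)) (X Z : Str m) : ℝ :=
  ∏ i, if X i = y then (if Z i = y then 0 else 1 / ((MM m : ℝ) - 1))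
       else (if Z i = X i then 1 else 0)

/-- Transition kernel of `D(X)`: choose `y` uniformly in `[M]`, then apply `D_y`. -/
def kerD (m : ℕ) (X Z : Str m) : ℝ := (1 / (MM m : ℝ)) * ∑ y, kerDy m y X Z

/-- The probability mass function of the distribution `D = D(U)`. -/
def dmass (m : ℕ) (Z : Str m) : ℝ := ∑ X, umass m X * kerD m X Z

/-- Transition kernel of `D_y^inv(Z)`: each coordinate is independently replaced by `y`
with probability `1/M` and left unchanged otherwise. -/
def kerDinvy (m : ℕ) (y : Fin (MM m)) (Z W : Str m) : ℝ :=
  ∏ i, ((1 / (MM m : ℝ)) * (if W i = y then 1 else 0)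
        + (1 - 1 / (MM m : ℝ)) * (if W i = Z i then 1 else 0))

/-- Transition kernel of `D^inv(Z)`: choose `y` uniformly in `[M] \ Im(Z)`,
then apply `D_y^inv`. -/
def kerDinv (m : ℕ) (Z W : Str m) : ℝ :=
  (1 / (((img Z)ᶜ.card : ℝ))) * ∑ y ∈ (img Z)ᶜ, kerDinvy m y Z W

/-- Probability of an event under a mass function. -/
def pr {m : ℕ} (μ : Str m → ℝ) (E : Set (Str m)) : ℝ := ∑ X, E.indicator μ X

/-- Expectation of a real function under a mass function. -/
def ev {m : ℕ} (μ : Str m → ℝ) (g : Str m → ℝ) : ℝ := ∑ X, μ X * g X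

/-- The surjectivity function `f_Surj`. -/
def fSurjB (m : ℕ) (X : Str m) : Bool := decide (img X = Finset.univ)

/-- The `q.2`-th bit of the binary encoding of coordinate `x_{q.1}` of `X`;
this realizes `X` as a string of `n = N·m` bits. -/
def bit {m : ℕ} (X : Str m) (q : Fin (NN m) × Fin m) : Bool :=
  Nat.testBit (X q.1).val q.2.val

/-!
A `k`-DNF has `1`-certificates of size `k`: a satisfying string keeps satisfying `F` as long as
the at most `k` coordinates read by one satisfied term are left unchanged. The step `X ↦ D_y(X)`
only moves coordinates equal to `y`, so it preserves such a certificate unless `y` is one of its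
at most `k` values; averaging over `y` gives `Pr_D[F] ≥ (1 - k/M) Pr_U[F]`. Conversely `U` is
the image of `D` under the kernel `D^inv`, which keeps each coordinate with probability at least
`1 - 1/M`, hence a certificate with probability at least `(1 - 1/M)^k ≥ 1 - k/M`; this gives
`Pr_U[F] ≥ (1 - k/M) Pr_D[F]`. With `k/M ≤ 1/2` the two inequalities yield the bounds.
-/

section Cylinder

variable {ι κ : Type*} [Fintype ι] [DecidableEq ι] [Fintype κ]

def cylinder (I : Finset ι) (z : ι → κ) : Finset (ι → κ) :=
  Fintype.piFinset fun i => if i ∈ I then {z i} else univ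

theorem mem_cylinder {I : Finset ι} {z W : ι → κ} : W ∈ cylinder I z ↔ ∀ i ∈ I, W i = z i := by
  simp only [cylinder, Fintype.mem_piFinset]
  refine forall_congr' fun i => ?_
  split_ifs with hi <;> simp [hi]

theorem sum_cylinder_prod {R : Type*} [CommSemiring R] (p : ι → κ → R)
    (hp : ∀ i, ∑ w, p i w = 1) (I : Finset ι) (z : ι → κ) :
    ∑ W ∈ cylinder I z, ∏ i, p i (W i) = ∏ i ∈ I, p i (z i) := by
  rw [cylinder, ← prod_univ_sum, ← Fintype.prod_ite_mem I]
  refine prod_congr rfl fun i _ => ?_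
  split_ifs
  · exact sum_singleton _ _
  · exact hp i

end Cylinder

/-- The `1`-certificate complexity of `F` is at most `k`. -/
def HasCertificatesOfSize {ι κ : Type*} (k : ℕ) (F : Set (ι → κ)) : Prop :=
  ∀ X ∈ F, ∃ I : Finset ι, I.card ≤ k ∧ ∀ Z : ι → κ, (∀ i ∈ I, Z i = X i) → Z ∈ F

theorem hasCertificatesOfSize_dnf {m k l : ℕ} (V : Fin l → Finset (Fin (NN m) × Fin m))
    (hV : ∀ t, (V t).card ≤ k) (a : Fin l → Fin (NN m) × Fin m → Bool) :
    HasCertificatesOfSize k {X : Str m | ∃ t, ∀ q ∈ V t, bit X q = a t q} := by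
  rintro X ⟨t, ht⟩
  refine ⟨(V t).image Prod.fst, card_image_le.trans (hV t), fun Z hZ => ⟨t, fun q hq => ?_⟩⟩
  rw [← ht q hq]
  simp only [bit, hZ q.1 (mem_image_of_mem _ hq)]

theorem ratio_bounds_of_mutual_lower_bounds {x u d : ℝ} (hx₀ : 0 ≤ x) (hx : x ≤ 1 / 2)
    (hu₀ : 0 < u) (hu : u ≤ 1) (hd : 0 ≤ d) (hud : (1 - x) * u ≤ d) (hdu : (1 - x) * d ≤ u) :
    1 - x ≤ d / u ∧ d / u ≤ 1 + 2 * x ∧ |d - u| ≤ 2 * x := by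
  have hd_le : d ≤ (1 + 2 * x) * u := by
    nlinarith [mul_le_mul_of_nonneg_left hdu (by linarith : (0 : ℝ) ≤ 1 + 2 * x),
      mul_nonneg (mul_nonneg hx₀ (by linarith : (0 : ℝ) ≤ 1 - 2 * x)) hd]
  refine ⟨(le_div_iff₀ hu₀).2 hud, (div_le_iff₀ hu₀).2 hd_le, abs_le.2 ⟨?_, ?_⟩⟩ <;>
    nlinarith [mul_le_mul_of_nonneg_left hu hx₀]

section Probability

variable {m : ℕ}

theorem pr_nonneg {μ : Str m → ℝ} (hμ : ∀ X, 0 ≤ μ X) (F : Set (Str m)) : 0 ≤ pr μ F :=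
  sum_nonneg fun X _ => Set.indicator_nonneg (fun X _ => hμ X) X

theorem pr_le_sum {μ : Str m → ℝ} (hμ : ∀ X, 0 ≤ μ X) (F : Set (Str m)) :
    pr μ F ≤ ∑ X, μ X :=
  sum_le_sum fun X _ => Set.indicator_le_self' (fun X _ => hμ X) X

theorem sum_le_pr {μ : Str m → ℝ} (hμ : ∀ X, 0 ≤ μ X) {F : Set (Str m)} {T : Finset (Str m)}
    (hT : ∀ X ∈ T, X ∈ F) : ∑ X ∈ T, μ X ≤ pr μ F :=
  calc ∑ X ∈ T, μ X = ∑ X ∈ T, F.indicator μ X :=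
        sum_congr rfl fun X hX => (Set.indicator_of_mem (hT X hX) μ).symm
    _ ≤ pr μ F := sum_le_sum_of_subset_of_nonneg (subset_univ T)
        fun X _ _ => Set.indicator_nonneg (fun X _ => hμ X) X

theorem pr_sum {β : Type*} (s : Finset β) (K : β → Str m → ℝ) (F : Set (Str m)) :
    pr (fun X => ∑ y ∈ s, K y X) F = ∑ y ∈ s, pr (K y) F := by
  classical
  unfold pr
  simp_rw [Set.indicator_apply]
  rw [sum_comm]
  refine sum_congr rfl fun X _ => ?_
  split_ifs <;> simp

theorem pr_const_mul (c : ℝ) (μ : Str m → ℝ) (F : Set (Str m)) :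
    pr (fun X => c * μ X) F = c * pr μ F := by
  classical
  unfold pr
  simp_rw [Set.indicator_apply, mul_sum]
  refine sum_congr rfl fun X _ => ?_
  split_ifs <;> simp

theorem mul_pr_le_pr_of_kernel {μ ν : Str m → ℝ} (K : Str m → Str m → ℝ)
    (hν : ∀ Z, ν Z = ∑ X, μ X * K X Z) (hμ : ∀ X, 0 ≤ μ X) (hK : ∀ X Z, 0 ≤ K X Z)
    {F : Set (Str m)} {c : ℝ} (hc : ∀ X ∈ F, 0 < μ X → c ≤ pr (K X) F) :
    c * pr μ F ≤ pr ν F := by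
  have hν_pr : pr ν F = ∑ X, μ X * pr (K X) F := by
    simp_rw [funext hν, pr_sum, pr_const_mul]
  rw [hν_pr, pr, mul_sum]
  refine sum_le_sum fun X _ => ?_
  by_cases hX : X ∈ F
  · rw [Set.indicator_of_mem hX, mul_comm]
    rcases (hμ X).eq_or_lt with h0 | hpos
    · simp [← h0]
    · exact mul_le_mul_of_nonneg_left (hc X hX hpos) hpos.le
  · rw [Set.indicator_of_notMem hX, mul_zero]
    exact mul_nonneg (hμ X) (pr_nonneg (hK X) F)

end Probability

section Kernels

variable {m : ℕ}

theorem MM_pos : 0 < MM m := Nat.two_pow_pos m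

theorem one_le_MM : (1 : ℝ) ≤ MM m := by
  exact_mod_cast MM_pos

theorem two_le_MM (hm : 1 ≤ m) : (2 : ℝ) ≤ MM m := by
  exact_mod_cast Nat.pow_le_pow_right two_pos hm

theorem umass_nonneg (X : Str m) : 0 ≤ umass m X := by
  have := one_le_MM (m := m)
  unfold umass
  positivity

theorem sum_umass : ∑ X : Str m, umass m X = 1 := by
  have := one_le_MM (m := m)
  simp only [umass, sum_const, card_univ, Fintype.card_fun, Fintype.card_fin, nsmul_eq_mul]
  push_cast
  field_simp

theorem pr_umass_pos {F : Set (Str m)} (hF : F.Nonempty) : 0 < pr (umass m) F := by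
  obtain ⟨X, hX⟩ := hF
  have := one_le_MM (m := m)
  calc 0 < umass m X := by unfold umass; positivity
    _ = ∑ Z ∈ {X}, umass m Z := (sum_singleton _ _).symm
    _ ≤ pr (umass m) F := sum_le_pr umass_nonneg fun Z hZ => mem_singleton.1 hZ ▸ hX

theorem pr_umass_le_one (F : Set (Str m)) : pr (umass m) F ≤ 1 :=
  (pr_le_sum umass_nonneg F).trans_eq sum_umass

theorem kerDy_nonneg (y : Fin (MM m)) (X Z : Str m) : 0 ≤ kerDy m y X Z := by
  have : (0 : ℝ) ≤ MM m - 1 := by linarith [one_le_MM (m := m)]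
  refine prod_nonneg fun i _ => ?_
  split_ifs <;> positivity

theorem kerD_nonneg (X Z : Str m) : 0 ≤ kerD m X Z := by
  have := one_le_MM (m := m)
  exact mul_nonneg (by positivity) (sum_nonneg fun y _ => kerDy_nonneg y X Z)

theorem dmass_nonneg (Z : Str m) : 0 ≤ dmass m Z :=
  sum_nonneg fun X _ => mul_nonneg (umass_nonneg X) (kerD_nonneg X Z)

theorem kerDinvy_nonneg (y : Fin (MM m)) (Z W : Str m) : 0 ≤ kerDinvy m y Z W := by
  have : 1 / (MM m : ℝ) ≤ 1 := div_le_one_of_le₀ one_le_MM (by positivity)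
  have := one_le_MM (m := m)
  refine prod_nonneg fun i _ =>
    add_nonneg (mul_nonneg (by positivity) ?_) (mul_nonneg (by linarith) ?_) <;>
    split_ifs <;> norm_num

theorem kerDinv_nonneg (Z W : Str m) : 0 ≤ kerDinv m Z W :=
  mul_nonneg (by positivity) (sum_nonneg fun y _ => kerDinvy_nonneg y Z W)

theorem sum_cylinder_kerDy (hm : 1 ≤ m) (y : Fin (MM m)) (X : Str m)
    (I : Finset (Fin (NN m))) :
    ∑ Z ∈ cylinder I X, kerDy m y X Z = if y ∉ I.image X then 1 else 0 := by
  have hM : (MM m : ℝ) - 1 ≠ 0 := by linarith [two_le_MM hm]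
  refine (sum_cylinder_prod (fun i z => if X i = y then (if z = y then 0 else
    1 / ((MM m : ℝ) - 1)) else (if z = X i then 1 else 0)) (fun i => ?_) I X).trans ?_
  · split_ifs with h
    · rw [sum_ite, sum_const_zero, zero_add, filter_ne', sum_const, card_erase_of_mem (mem_univ y),
        card_univ, Fintype.card_fin, nsmul_eq_mul, Nat.cast_pred MM_pos]
      field_simp
    · simp
  · by_cases hy : y ∈ I.image X
    · obtain ⟨i, hi, rfl⟩ := mem_image.1 hy
      rw [if_neg (not_not.2 hy)]
      exact prod_eq_zero hi (by simp)
    · rw [if_pos hy]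
      refine prod_eq_one fun i hi => ?_
      rw [if_neg fun h : X i = y => hy (h ▸ mem_image_of_mem X hi), if_pos rfl]

theorem pr_kerDy_ge (hm : 1 ≤ m) {F : Set (Str m)} {X : Str m} {I : Finset (Fin (NN m))}
    (hI : ∀ Z, (∀ i ∈ I, Z i = X i) → Z ∈ F) (y : Fin (MM m)) :
    (if y ∉ I.image X then 1 else 0) ≤ pr (kerDy m y X) F :=
  sum_cylinder_kerDy hm y X I ▸
    sum_le_pr (kerDy_nonneg y X) fun Z hZ => hI Z (mem_cylinder.1 hZ)

theorem pr_kerD_ge (hm : 1 ≤ m) {k : ℕ} {F : Set (Str m)} {X : Str m} {I : Finset (Fin (NN m))}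
    (hk : I.card ≤ k) (hI : ∀ Z, (∀ i ∈ I, Z i = X i) → Z ∈ F) :
    1 - k / (MM m : ℝ) ≤ pr (kerD m X) F := by
  have hM := one_le_MM (m := m)
  have hcount : (MM m : ℝ) - k ≤ ∑ y, (if y ∉ I.image X then 1 else 0 : ℝ) := by
    have : ((I.image X).card : ℝ) ≤ k := by exact_mod_cast card_image_le.trans hk
    rw [sum_boole, filter_notMem_eq_sdiff, ← compl_eq_univ_sdiff, card_compl, Fintype.card_fin,
      Nat.cast_sub ((card_le_univ _).trans_eq (Fintype.card_fin _))]
    linarith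
  calc 1 - k / (MM m : ℝ) = 1 / MM m * (MM m - k) := by field_simp
    _ ≤ 1 / MM m * ∑ y, pr (kerDy m y X) F := by
        gcongr
        exact hcount.trans (sum_le_sum fun y _ => pr_kerDy_ge hm hI y)
    _ = pr (kerD m X) F := by
        rw [← pr_sum, ← pr_const_mul]
        rfl

theorem sum_cylinder_kerDinvy (y : Fin (MM m)) (Z : Str m) (I : Finset (Fin (NN m))) :
    ∑ W ∈ cylinder I Z, kerDinvy m y Z W
      = ∏ i ∈ I, (1 / (MM m : ℝ) * (if Z i = y then 1 else 0) + (1 - 1 / MM m)) := by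
  refine (sum_cylinder_prod (fun i w => 1 / (MM m : ℝ) * (if w = y then 1 else 0)
    + (1 - 1 / MM m) * (if w = Z i then 1 else 0)) (fun i => ?_) I Z).trans ?_
  · simp [sum_add_distrib]
  · simp

theorem pr_kerDinvy_ge {F : Set (Str m)} {Z : Str m} {I : Finset (Fin (NN m))}
    (hI : ∀ W, (∀ i ∈ I, W i = Z i) → W ∈ F) (y : Fin (MM m)) :
    1 - I.card / (MM m : ℝ) ≤ pr (kerDinvy m y Z) F := by
  have hM := one_le_MM (m := m)
  have h₀ : 0 ≤ 1 / (MM m : ℝ) := by positivity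
  have h₁ : 1 / (MM m : ℝ) ≤ 1 := div_le_one_of_le₀ hM (by positivity)
  calc 1 - I.card / (MM m : ℝ) = 1 + I.card * -(1 / MM m) := by ring
    _ ≤ (1 + -(1 / MM m)) ^ I.card := one_add_mul_le_pow (by linarith) _
    _ = ∏ i ∈ I, (1 - 1 / (MM m : ℝ)) := by rw [prod_const]; ring
    _ ≤ ∏ i ∈ I, (1 / (MM m : ℝ) * (if Z i = y then 1 else 0) + (1 - 1 / MM m)) :=
        prod_le_prod (fun _ _ => by linarith)
          fun i _ => le_add_of_nonneg_left (mul_nonneg h₀ (by split_ifs <;> norm_num))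
    _ = ∑ W ∈ cylinder I Z, kerDinvy m y Z W := (sum_cylinder_kerDinvy y Z I).symm
    _ ≤ pr (kerDinvy m y Z) F :=
        sum_le_pr (kerDinvy_nonneg y Z) fun W hW => hI W (mem_cylinder.1 hW)

theorem pr_kerDinv_ge {k : ℕ} {F : Set (Str m)} {Z : Str m} {I : Finset (Fin (NN m))}
    (hk : I.card ≤ k) (hI : ∀ W, (∀ i ∈ I, W i = Z i) → W ∈ F) (hZ : (img Z)ᶜ.Nonempty) :
    1 - k / (MM m : ℝ) ≤ pr (kerDinv m Z) F := by
  have hM := one_le_MM (m := m)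
  have hc : (0 : ℝ) < (img Z)ᶜ.card := by exact_mod_cast hZ.card_pos
  have hk' : (I.card : ℝ) ≤ k := by exact_mod_cast hk
  calc 1 - k / (MM m : ℝ) = 1 / (img Z)ᶜ.card * ∑ _y ∈ (img Z)ᶜ, (1 - k / (MM m : ℝ)) := by
        rw [sum_const, nsmul_eq_mul]
        field_simp
    _ ≤ 1 / (img Z)ᶜ.card * ∑ y ∈ (img Z)ᶜ, pr (kerDinvy m y Z) F := by
        gcongr with y
        exact le_trans (by gcongr) (pr_kerDinvy_ge hI y)
    _ = pr (kerDinv m Z) F := by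
        rw [← pr_sum, ← pr_const_mul]
        rfl

theorem sum_kerDy_left (hm : 1 ≤ m) (y : Fin (MM m)) (Z : Str m) :
    ∑ X, kerDy m y X Z = if y ∈ img Z then 0 else ((MM m : ℝ) / (MM m - 1)) ^ NN m := by
  have hM : (MM m : ℝ) - 1 ≠ 0 := by linarith [two_le_MM hm]
  have hfactor : ∀ i, ∑ x, (if x = y then (if Z i = y then 0 else 1 / ((MM m : ℝ) - 1))
      else (if Z i = x then 1 else 0)) = if Z i = y then 0 else (MM m : ℝ) / (MM m - 1) := by
    intro i
    rw [← add_sum_erase _ _ (mem_univ y), if_pos rfl,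
      sum_congr rfl fun x hx => if_neg (ne_of_mem_erase hx), sum_ite_eq]
    split_ifs with h h' <;> simp_all
    field_simp
    ring
  calc ∑ X, kerDy m y X Z
      = ∏ i, ∑ x, (if x = y then (if Z i = y then 0 else 1 / ((MM m : ℝ) - 1))
          else (if Z i = x then 1 else 0)) := by
        unfold kerDy
        exact (Fintype.prod_sum fun i x => if x = y then (if Z i = y then 0 else
          1 / ((MM m : ℝ) - 1)) else (if Z i = x then 1 else 0)).symm
    _ = _ := by
        simp_rw [hfactor]
        split_ifs with hy
        · obtain ⟨i, -, hi⟩ := mem_image.1 hy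
          exact prod_eq_zero (mem_univ i) (if_pos hi)
        · rw [prod_congr rfl fun i _ => if_neg fun h => hy (mem_image.2 ⟨i, mem_univ i, h⟩),
            prod_const, card_univ, Fintype.card_fin]

theorem dmass_eq (hm : 1 ≤ m) (Z : Str m) :
    dmass m Z = (img Z)ᶜ.card / MM m * (1 / ((MM m : ℝ) - 1)) ^ NN m := by
  have hM : (MM m : ℝ) - 1 ≠ 0 := by linarith [two_le_MM hm]
  have hM' := one_le_MM (m := m)
  have hsum : ∑ y, ∑ X, kerDy m y X Z = (img Z)ᶜ.card * ((MM m : ℝ) / (MM m - 1)) ^ NN m := by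
    simp_rw [sum_kerDy_left hm]
    rw [sum_ite, sum_const_zero, zero_add, filter_notMem_eq_sdiff, ← compl_eq_univ_sdiff,
      sum_const, nsmul_eq_mul]
  simp only [dmass, umass, kerD, ← mul_sum]
  rw [sum_comm, hsum]
  field_simp
  ring

theorem compl_img_nonempty_of_dmass_pos (hm : 1 ≤ m) {Z : Str m} (h : 0 < dmass m Z) :
    (img Z)ᶜ.Nonempty := by
  rw [nonempty_iff_ne_empty]
  intro he
  rw [dmass_eq hm, he, card_empty] at h
  simp at h

/-- `(1 / (M - 1))^N` is the uniform mass on strings avoiding `y`, and `D_y^inv` maps this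
distribution to `U`. -/
theorem sum_avoiding_mul_kerDinvy (hm : 1 ≤ m) (y : Fin (MM m)) (W : Str m) :
    ∑ Z with y ∉ img Z, (1 / ((MM m : ℝ) - 1)) ^ NN m * kerDinvy m y Z W = umass m W := by
  have hM : (MM m : ℝ) - 1 ≠ 0 := by linarith [two_le_MM hm]
  have hM' := one_le_MM (m := m)
  set q : Fin (NN m) → Fin (MM m) → ℝ := fun i z => 1 / ((MM m : ℝ) - 1) *
    (1 / MM m * (if W i = y then 1 else 0) + (1 - 1 / MM m) * (if W i = z then 1 else 0))
  have havoid : ({Z | y ∉ img Z} : Finset (Str m)) = Fintype.piFinset fun _ => {y}ᶜ := by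
    ext Z
    simp [img, Fintype.mem_piFinset]
  have hprod : ∀ Z, (1 / ((MM m : ℝ) - 1)) ^ NN m * kerDinvy m y Z W = ∏ i, q i (Z i) := by
    intro Z
    rw [prod_mul_distrib, prod_const, card_univ, Fintype.card_fin]
    rfl
  have hfactor : ∀ i, ∑ z ∈ ({y}ᶜ : Finset (Fin (MM m))), q i z = 1 / MM m := by
    intro i
    rw [← mul_sum, sum_add_distrib, sum_const, ← mul_sum, sum_ite_eq, card_compl, card_singleton,
      Fintype.card_fin, nsmul_eq_mul, Nat.cast_pred MM_pos]
    by_cases h : W i = y <;> simp [h] <;> field_simp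
  rw [havoid, sum_congr rfl fun Z _ => hprod Z, ← prod_univ_sum (fun _ => {y}ᶜ) q,
    prod_congr rfl fun i _ => hfactor i, prod_const, card_univ, Fintype.card_fin, one_div_pow]
  rfl

theorem sum_dmass_mul_kerDinv (hm : 1 ≤ m) (W : Str m) :
    ∑ Z, dmass m Z * kerDinv m Z W = umass m W := by
  have hM : (MM m : ℝ) - 1 ≠ 0 := by linarith [two_le_MM hm]
  have hM' := one_le_MM (m := m)
  have hterm : ∀ Z, dmass m Z * kerDinv m Z W = ∑ y ∈ (img Z)ᶜ,
      1 / MM m * ((1 / ((MM m : ℝ) - 1)) ^ NN m * kerDinvy m y Z W) := by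
    intro Z
    rw [dmass_eq hm, kerDinv, ← mul_sum, ← mul_sum]
    rcases eq_or_ne (img Z)ᶜ.card 0 with h | h
    · simp [card_eq_zero.1 h]
    · have : ((img Z)ᶜ.card : ℝ) ≠ 0 := by exact_mod_cast h
      field_simp
  calc ∑ Z, dmass m Z * kerDinv m Z W
      = ∑ Z, ∑ y ∈ (img Z)ᶜ, 1 / MM m * ((1 / ((MM m : ℝ) - 1)) ^ NN m * kerDinvy m y Z W) :=
        sum_congr rfl fun Z _ => hterm Z
    _ = ∑ y, ∑ Z with y ∉ img Z,
          1 / MM m * ((1 / ((MM m : ℝ) - 1)) ^ NN m * kerDinvy m y Z W) :=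
        sum_comm' fun Z y => by simp
    _ = ∑ _y : Fin (MM m), 1 / MM m * umass m W :=
        sum_congr rfl fun y _ => by rw [← mul_sum, sum_avoiding_mul_kerDinvy hm]
    _ = umass m W := by
        rw [sum_const, card_univ, Fintype.card_fin, nsmul_eq_mul]
        field_simp

end Kernels

/-- for any `k`-DNF formula `F = C_1 ∨ … ∨ C_ℓ` over the `n = Nm` encoding bits
(each term of width at most `k`), with `k ≤ M/2` and `F` not identically false:
`1 − k/M ≤ Pr_D[F]/Pr_U[F] ≤ 1 + 2k/M`, and in particular `|Pr_D[F] − Pr_U[F]| ≤ 2k/M`. -/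
theorem stmt7 (m k l : ℕ) (hm : 1 ≤ m) (hk : 2 * k ≤ MM m)
    (V : Fin l → Finset (Fin (NN m) × Fin m)) (hV : ∀ t, (V t).card ≤ k)
    (a : Fin l → Fin (NN m) × Fin m → Bool)
    (F : Set (Str m)) (hF : F = {X : Str m | ∃ t, ∀ q ∈ V t, bit X q = a t q})
    (hne : F.Nonempty) :
    1 - (k : ℝ) / (MM m : ℝ) ≤ pr (dmass m) F / pr (umass m) F ∧
    pr (dmass m) F / pr (umass m) F ≤ 1 + 2 * (k : ℝ) / (MM m : ℝ) ∧
    |pr (dmass m) F - pr (umass m) F| ≤ 2 * (k : ℝ) / (MM m : ℝ) := by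
  have hcert : HasCertificatesOfSize k F := hF ▸ hasCertificatesOfSize_dnf V hV a
  have hforward : (1 - k / (MM m : ℝ)) * pr (umass m) F ≤ pr (dmass m) F :=
    mul_pr_le_pr_of_kernel (kerD m) (fun _ => rfl) umass_nonneg kerD_nonneg fun X hX _ =>
      let ⟨_, hI, hIF⟩ := hcert X hX
      pr_kerD_ge hm hI hIF
  have hbackward : (1 - k / (MM m : ℝ)) * pr (dmass m) F ≤ pr (umass m) F :=
    mul_pr_le_pr_of_kernel (kerDinv m) (fun W => (sum_dmass_mul_kerDinv hm W).symm)
      dmass_nonneg kerDinv_nonneg fun Z hZ hpos =>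
      let ⟨_, hI, hIF⟩ := hcert Z hZ
      pr_kerDinv_ge hI hIF (compl_img_nonempty_of_dmass_pos hm hpos)
  have hM := one_le_MM (m := m)
  have hkM : k / (MM m : ℝ) ≤ 1 / 2 := by
    rw [div_le_div_iff₀ (by positivity) two_pos]
    exact_mod_cast (by omega : k * 2 ≤ 1 * MM m)
  obtain ⟨hlower, hupper, habs⟩ := ratio_bounds_of_mutual_lower_bounds (by positivity) hkM
    (pr_umass_pos hne) (pr_umass_le_one F) (pr_nonneg dmass_nonneg F) hforward hbackward
  exact ⟨hlower, mul_div_assoc 2 (k : ℝ) _ ▸ hupper, mul_div_assoc 2 (k : ℝ) _ ▸ habs⟩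

end
end GLN
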